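/- arXiv:2101.08331 — 2 statements merged into one kernel-verified Lean document; each statement's English description precedes it below -/
import Mathlib

section
/- In the setting of the abstract a posteriori estimates, define the combined error E = |||p - q||| + |||u - v|||_* + (C/λ)‖f - div v‖, where |||·||| = ‖K^{1/2} D ·‖ and |||·|||_* = ‖K^{-1/2} ·‖. If both |||p - q||| ≤ M(q,v;f) and |||u - v|||_* ≤ M(q,v;f) hold, where M(q,v;f) = |||v + K D q|||_* + (C/λ)‖f - div v‖, and u = -K D p, then M(q,v;f) ≤ E ≤ 3 M(q,v;f). -/
/-!
With `u = -K D p`, the flux residual splits as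
`v + K D q = -(u - v) - K D (p - q)`, and `|||p - q||| = |||K D (p - q)|||_*`, so the
triangle inequality bounds the first term of `M` by the two error terms of `E`. Hence
`M ≤ E`, while each of the three terms of `E` is at most `M`.
-/

theorem norm_map_add_le_of_eq_neg {E F G : Type*} [AddCommGroup E] [SeminormedAddCommGroup F]
    [FunLike G E F] [AddMonoidHomClass G E F] (L : G) {u v a b : E} (hu : u = -b) :
    ‖L (v + a)‖ ≤ ‖L (u - v)‖ + ‖L (b - a)‖ := by
  have hsplit : v + a = -(u - v) - (b - a) := by rw [hu]; abel
  calc ‖L (v + a)‖ = ‖-L (u - v) - L (b - a)‖ := by rw [hsplit, map_sub, map_neg]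
    _ ≤ ‖-L (u - v)‖ + ‖L (b - a)‖ := norm_sub_le _ _
    _ = ‖L (u - v)‖ + ‖L (b - a)‖ := by rw [norm_neg]

theorem le_combined_error_and_le_three_mul {x y z r M E : ℝ} (hz : 0 ≤ z)
    (hM : M = z + r) (hE : E = x + y + r) (hzxy : z ≤ x + y) (hx : x ≤ M) (hy : y ≤ M) :
    M ≤ E ∧ E ≤ 3 * M := by
  constructor <;> linarith

theorem combined_error_efficiency_general
    {H V : Type*} [NormedAddCommGroup H] [InnerProductSpace ℝ H]
    [NormedAddCommGroup V] [InnerProductSpace ℝ V]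
    (D : H →ₗ[ℝ] V) (K Khalf Kinvhalf : V →ₗ[ℝ] V)
    (hrel : ∀ r : H, ‖Khalf (D r)‖ = ‖Kinvhalf (K (D r))‖)
    (lam C : ℝ)
    (dvg : V →ₗ[ℝ] H)
    (p q : H) (u v : V) (f : H)
    (hu : u = -(K (D p)))
    (M E : ℝ)
    (hM : M = ‖Kinvhalf (v + K (D q))‖ + (C / lam) * ‖f - dvg v‖)
    (hE : E = ‖Khalf (D (p - q))‖ + ‖Kinvhalf (u - v)‖ + (C / lam) * ‖f - dvg v‖)
    (hp_bound : ‖Khalf (D (p - q))‖ ≤ M)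
    (hu_bound : ‖Kinvhalf (u - v)‖ ≤ M) :
    M ≤ E ∧ E ≤ 3 * M := by
  have hflux : ‖Kinvhalf (v + K (D q))‖ ≤ ‖Khalf (D (p - q))‖ + ‖Kinvhalf (u - v)‖ :=
    calc ‖Kinvhalf (v + K (D q))‖ ≤ ‖Kinvhalf (u - v)‖ + ‖Kinvhalf (K (D p) - K (D q))‖ :=
          norm_map_add_le_of_eq_neg Kinvhalf hu
      _ = ‖Khalf (D (p - q))‖ + ‖Kinvhalf (u - v)‖ := by
          rw [← map_sub, ← map_sub, ← hrel, add_comm]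
  exact le_combined_error_and_le_three_mul (norm_nonneg _) hM hE hflux hp_bound hu_bound

/-- Efficiency of the combined error: the majorant `M` satisfies `M ≤ E ≤ 3 M`
for the combined error `E = |||p - q||| + |||u - v|||_* + (C/λ)‖f - div v‖`. -/
theorem combined_error_efficiency
    {H V : Type*} [NormedAddCommGroup H] [InnerProductSpace ℝ H]
    [NormedAddCommGroup V] [InnerProductSpace ℝ V]
    (D : H →ₗ[ℝ] V) (K Khalf Kinvhalf : V →ₗ[ℝ] V)
    (hKhalf : ∀ v : V, Khalf (Khalf v) = K v)
    (hKinvhalf : ∀ v : V, Kinvhalf (Khalf v) = v)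
    (hrel : ∀ r : H, ‖Khalf (D r)‖ = ‖Kinvhalf (K (D r))‖)
    (lam C : ℝ) (hlam : 0 < lam)
    (dvg : V →ₗ[ℝ] H)
    (p q : H) (u v : V) (f : H)
    (hu : u = -(K (D p)))
    (M E : ℝ)
    (hM : M = ‖Kinvhalf (v + K (D q))‖ + (C / lam) * ‖f - dvg v‖)
    (hE : E = ‖Khalf (D (p - q))‖ + ‖Kinvhalf (u - v)‖ + (C / lam) * ‖f - dvg v‖)
    (hp_bound : ‖Khalf (D (p - q))‖ ≤ M)
    (hu_bound : ‖Kinvhalf (u - v)‖ ≤ M) :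
    M ≤ E ∧ E ≤ 3 * M :=
  combined_error_efficiency_general D K Khalf Kinvhalf hrel lam C dvg p q u v f hu M E hM hE
    hp_bound hu_bound
end

section
/- Let H, V be real inner product spaces, D : H → V linear, and suppose integration by parts holds: ⟨div w, q⟩_H = -⟨w, D q⟩_V for all w in an admissible subspace W ⊆ V and all q ∈ H. Let p ∈ H with u := -K D p ∈ W and div u = f. Then for any q ∈ H and any v ∈ W, the error identity holds: ⟨K D(p - q), D(p - q)⟩ = ⟨-(v + K D q), D(p - q)⟩ + ⟨f - div v, p - q⟩. -/
open scoped RealInnerProductSpace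

theorem inner_map_sub_map_eq_neg_inner_of_ibp
    {H V : Type*} [NormedAddCommGroup H] [InnerProductSpace ℝ H]
    [NormedAddCommGroup V] [InnerProductSpace ℝ V]
    {D : H →ₗ[ℝ] V} {W : Submodule ℝ V} {dvg : V →ₗ[ℝ] H}
    (hIBP : ∀ w ∈ W, ∀ q : H, ⟪dvg w, q⟫ = -⟪w, D q⟫)
    {u v : V} (hu : u ∈ W) (hv : v ∈ W) (r : H) :
    ⟪dvg u - dvg v, r⟫ = -⟪u - v, D r⟫ := by
  rw [← map_sub]
  exact hIBP (u - v) (W.sub_mem hu hv) r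

/-- The fundamental error identity:
`⟪K D(p - q), D(p - q)⟫ = ⟪-(v + K D q), D(p - q)⟫ + ⟪f - div v, p - q⟫`. -/
theorem fundamental_error_identity
    {H V : Type*} [NormedAddCommGroup H] [InnerProductSpace ℝ H]
    [NormedAddCommGroup V] [InnerProductSpace ℝ V]
    (D : H →ₗ[ℝ] V) (K : V →ₗ[ℝ] V)
    (W : Submodule ℝ V) (dvg : V →ₗ[ℝ] H)
    (hIBP : ∀ w ∈ W, ∀ q : H, ⟪dvg w, q⟫ = -⟪w, D q⟫)
    (p : H) (u : V) (hu : u = -(K (D p))) (huW : u ∈ W)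
    (f : H) (hf : dvg u = f)
    (q : H) (v : V) (hvW : v ∈ W) :
    ⟪K (D (p - q)), D (p - q)⟫ =
      ⟪-(v + K (D q)), D (p - q)⟫ + ⟪f - dvg v, p - q⟫ := by
  have hflux : K (D (p - q)) = -(v + K (D q)) - (u - v) := by
    rw [hu, map_sub, map_sub]
    abel
  calc ⟪K (D (p - q)), D (p - q)⟫
      = ⟪-(v + K (D q)), D (p - q)⟫ - ⟪u - v, D (p - q)⟫ := by
        rw [hflux, inner_sub_left]
    _ = ⟪-(v + K (D q)), D (p - q)⟫ + ⟪f - dvg v, p - q⟫ := by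
        rw [← hf, inner_map_sub_map_eq_neg_inner_of_ibp hIBP huW hvW, sub_eq_add_neg]
end
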